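/- Tree inference guarantee: Let G = (V,E) be a tree on n vertices with ground truth Y ∈ {±1}^V, edge observations X_{uv} flipped independently with probability p, and vertex observations Z_v flipped independently with probability q = 1/2 − ε < 1/2. Let Ŷ minimize ∑_v 1{Ŷ_v ≠ Z_v} subject to ∑_{(u,v)∈E} 1{Ŷ_u ≠ X_{uv}Ŷ_v} ≤ 2pn + 2log(2/δ). Then with probability at least 1 − δ, ∑_v 1{Ŷ_v ≠ Y_v} ≤ (1/ε²)·(2pn + 2log(2/δ) + 1)·log(2e/(pδ)). -/

import Mathlib

open Finset

/-- The product label `Y_u Y_v` of an unordered edge. -/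
def edgeLabel {V : Type*} (Y : V → ℤˣ) : Sym2 V → ℤˣ :=
  Sym2.lift ⟨fun u v => Y u * Y v, fun _ _ => mul_comm _ _⟩

/-- Number of edges of `G` violated by the labeling `Yh` given edge observations `X`. -/
def edgeCost {V : Type*} [Fintype V] [DecidableEq V] (G : SimpleGraph V)
    [DecidableRel G.Adj] (Yh : V → ℤˣ) (X : Sym2 V → ℤˣ) : ℕ :=
  (G.edgeFinset.filter (fun e => edgeLabel Yh e ≠ X e)).card

/-- Probability weight of an edge-noise configuration `f`: independent flips w.p. `p`. -/
def ewt {V : Type*} [Fintype V] [DecidableEq V] (p : ℝ) (f : Sym2 V → Bool) : ℝ :=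
  ∏ e : Sym2 V, (if f e then p else 1 - p)

/-- Probability weight of a vertex-noise configuration `g`: independent flips w.p. `q`. -/
def vwt {V : Type*} [Fintype V] (q : ℝ) (g : V → Bool) : ℝ :=
  ∏ u : V, (if g u then q else 1 - q)

/-- Noisy edge observations determined by ground truth `Y` and edge noise `f`. -/
def Xof {V : Type*} (Y : V → ℤˣ) (f : Sym2 V → Bool) : Sym2 V → ℤˣ :=
  fun e => (if f e then -1 else 1) * edgeLabel Y e

/-- Noisy vertex observations determined by ground truth `Y` and vertex noise `g`. -/
def Zof {V : Type*} (Y : V → ℤˣ) (g : V → Bool) : V → ℤˣ :=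
  fun v => (if g v then -1 else 1) * Y v

/-!
Write `B = 2pn + 2 log (2/δ)` for the budget of violated edges. The truth `Y` violates exactly
the flipped edges, so by Chernoff's bound it is infeasible with probability at most `δ/2`.
If `Y` is feasible, the minimality of `Ŷ` against `Y` means that among the vertices where
`Ŷ ≠ Y` at least half of the vertex observations are flipped; for a fixed labeling at distance
`d` from `Y` this has probability at most `(2 √(q (1 - q))) ^ d ≤ exp (-2 ε² d)`. A union bound
over the feasible labelings far from `Y` then costs at most `δ/2`, because on a tree a labeling
is determined by its value at one vertex and its set of violated edges, so there are at most
`2 (1 + 2p) ^ (n - 1) (2p) ^ (-B)` feasible labelings.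
-/

open Real

lemma sum_filter_le_sum_mul {β : Type*} {w φ : β → ℝ} {P : β → Prop} [DecidablePred P]
    (hw : ∀ b, 0 ≤ w b) (hφ : ∀ b, P b → 1 ≤ φ b) (hφ0 : ∀ b, 0 ≤ φ b) (s : Finset β) :
    ∑ b ∈ s.filter P, w b ≤ ∑ b ∈ s, w b * φ b := by
  rw [sum_filter]
  refine sum_le_sum fun b _ => ?_
  split_ifs with hb
  · exact le_mul_of_one_le_right (hw b) (hφ b hb)
  · exact mul_nonneg (hw b) (hφ0 b)

lemma sum_filter_le_sum_sum_filter {β ι : Type*} [Fintype β] {w : β → ℝ} (hw : ∀ b, 0 ≤ w b)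
    {P : β → Prop} [DecidablePred P] {Q : ι → β → Prop} [∀ i, DecidablePred (Q i)] {S : Finset ι}
    (h : ∀ b, P b → ∃ i ∈ S, Q i b) :
    ∑ b ∈ univ.filter P, w b ≤ ∑ i ∈ S, ∑ b ∈ univ.filter (Q i), w b := by
  simp only [sum_filter]
  rw [sum_comm]
  refine sum_le_sum fun b _ => ?_
  have hterm : ∀ i ∈ S, 0 ≤ if Q i b then w b else 0 := fun i _ => by split_ifs <;> simp [hw]
  split_ifs with hb
  · obtain ⟨i, hi, hQ⟩ := h b hb
    simpa [hQ] using single_le_sum hterm hi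
  · exact sum_nonneg hterm

lemma one_sub_add_le_sum_sum_mul_ite {α β : Type*} [Fintype α] [Fintype β] {w₁ : α → ℝ}
    {w₂ : β → ℝ} (hw₁ : ∀ a, 0 ≤ w₁ a) (hw₂ : ∀ b, 0 ≤ w₂ b) (hw₁1 : ∑ a, w₁ a = 1)
    (hw₂1 : ∑ b, w₂ b = 1) {E : α → Prop} [DecidablePred E] {Good : α → β → Prop}
    [∀ a, DecidablePred (Good a)] {δ₁ δ₂ : ℝ} (hδ₂ : 0 ≤ δ₂)
    (hE : ∑ a ∈ univ.filter E, w₁ a ≤ δ₁)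
    (hGood : ∀ a, ¬E a → ∑ b ∈ univ.filter (fun b => ¬Good a b), w₂ b ≤ δ₂) :
    1 - (δ₁ + δ₂) ≤ ∑ a, ∑ b, w₁ a * w₂ b * (if Good a b then 1 else 0) := by
  have hinner : ∀ a, 1 - δ₂ - (if E a then 1 else 0)
      ≤ ∑ b, w₂ b * (if Good a b then 1 else 0) := by
    intro a
    have hsplit := sum_filter_add_sum_filter_not univ (Good a) w₂
    simp only [mul_ite, mul_one, mul_zero, ← sum_filter]
    split_ifs with ha
    · linarith [sum_nonneg fun b (_ : b ∈ univ.filter (Good a)) => hw₂ b]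
    · linarith [hGood a ha]
  calc 1 - (δ₁ + δ₂) ≤ ∑ a, w₁ a * (1 - δ₂ - if E a then 1 else 0) := by
        simp only [mul_sub, mul_ite, mul_one, mul_zero, sum_sub_distrib, ← sum_mul, hw₁1,
          ← sum_filter]
        linarith
    _ ≤ ∑ a, ∑ b, w₁ a * w₂ b * (if Good a b then 1 else 0) := by
        refine sum_le_sum fun a _ => ?_
        simp only [mul_assoc, ← mul_sum]
        exact mul_le_mul_of_nonneg_left (hinner a) (hw₁ a)

lemma pow_mul_one_sub_pow_le_sqrt_pow {r : ℝ} (h0 : 0 ≤ r) (hr : r ≤ 1 - r) {k d : ℕ}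
    (hkd : k ≤ d) (hdk : d ≤ 2 * k) : r ^ k * (1 - r) ^ (d - k) ≤ √(r * (1 - r)) ^ d := by
  have hσ : r ≤ √(r * (1 - r)) := Real.le_sqrt_of_sq_le (by nlinarith)
  obtain ⟨m, c, rfl, rfl⟩ : ∃ m c, k = m + c ∧ d = 2 * m + c :=
    ⟨d - k, k - (d - k), by omega, by omega⟩
  rw [show 2 * m + c - (m + c) = m by omega]
  calc r ^ (m + c) * (1 - r) ^ m = (r * (1 - r)) ^ m * r ^ c := by
        rw [pow_add, mul_pow]; ring
    _ ≤ (r * (1 - r)) ^ m * √(r * (1 - r)) ^ c :=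
        mul_le_mul_of_nonneg_left (pow_le_pow_left₀ h0 hσ c) (pow_nonneg (by nlinarith) m)
    _ = √(r * (1 - r)) ^ (2 * m + c) := by
        rw [pow_add, pow_mul, Real.sq_sqrt (by nlinarith)]

lemma two_mul_sqrt_mul_one_sub_le_exp (ε : ℝ) :
    2 * √((1/2 - ε) * (1 - (1/2 - ε))) ≤ exp (-(2 * ε ^ 2)) := by
  have h := add_one_le_exp (-(4 * ε ^ 2))
  have hsq : exp (-(2 * ε ^ 2)) ^ 2 = exp (-(4 * ε ^ 2)) := by rw [← exp_nat_mul]; ring_nf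
  rw [← le_div_iff₀' two_pos, sqrt_le_left (by positivity), div_pow, hsq]
  linarith

section ProductBernoulli

variable {α : Type*} [Fintype α]

lemma vwt_nonneg {r : ℝ} (h0 : 0 ≤ r) (h1 : r ≤ 1) (g : α → Bool) : 0 ≤ vwt r g :=
  prod_nonneg fun _ _ => by split <;> linarith

lemma sum_prod_bool [DecidableEq α] (φ : α → Bool → ℝ) :
    ∑ g : α → Bool, ∏ a, φ a (g a) = ∏ a, (φ a true + φ a false) := by
  simp only [← Fintype.prod_sum, Fintype.sum_bool]

lemma sum_vwt_mul_prod [DecidableEq α] (r : ℝ) (φ : α → Bool → ℝ) :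
    ∑ g : α → Bool, vwt r g * ∏ a, φ a (g a) = ∏ a, (r * φ a true + (1 - r) * φ a false) := by
  simp only [vwt, ← prod_mul_distrib]
  rw [sum_prod_bool (fun a b => (if b then r else 1 - r) * φ a b)]
  simp

lemma sum_vwt [DecidableEq α] (r : ℝ) : ∑ g : α → Bool, vwt r g = 1 := by
  simpa using sum_vwt_mul_prod r (fun _ _ => 1)

/-- Chernoff bound, through the moment generating function `(1 + r (e - 1)) ^ #s` of the
number of successes in `s`. -/
lemma sum_vwt_filter_lt_card_le [DecidableEq α] {r : ℝ} (h0 : 0 ≤ r) (h1 : r ≤ 1)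
    (s : Finset α) (B : ℝ) :
    ∑ g ∈ univ.filter (fun g : α → Bool => B < #(s.filter fun a => g a)), vwt r g
      ≤ exp (r * (exp 1 - 1) * #s - B) := by
  have hmgf : ∀ g : α → Bool,
      exp (#(s.filter fun a => g a)) = ∏ a, exp (if a ∈ s ∧ g a then 1 else 0) := by
    intro g
    rw [← exp_sum, sum_boole]
    congr 3
    ext a; simp
  calc ∑ g ∈ univ.filter (fun g : α → Bool => B < #(s.filter fun a => g a)), vwt r g
      ≤ ∑ g : α → Bool, vwt r g * (exp (-B) * exp (#(s.filter fun a => g a))) := by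
        refine sum_filter_le_sum_mul (vwt_nonneg h0 h1) (fun g hg => ?_)
          (fun _ => by positivity) _
        rw [← exp_add]
        exact one_le_exp (by linarith)
    _ = exp (-B) * (1 + r * (exp 1 - 1)) ^ #s := by
        simp_rw [hmgf, mul_left_comm _ (exp (-B)), ← mul_sum]
        rw [sum_vwt_mul_prod r (fun a b => exp (if a ∈ s ∧ b then 1 else 0)), ← prod_const,
          ← univ_inter s, ← prod_ite_mem univ s]
        congr 1
        refine prod_congr rfl fun a _ => ?_
        by_cases ha : a ∈ s <;> simp [ha]
        ring
    _ ≤ exp (-B) * exp (r * (exp 1 - 1)) ^ #s := by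
        have he : 0 ≤ exp 1 - 1 := by linarith [add_one_le_exp 1]
        gcongr
        linarith [add_one_le_exp (r * (exp 1 - 1))]
    _ = exp (r * (exp 1 - 1) * #s - B) := by
        rw [← exp_nat_mul, ← exp_add]; ring_nf

lemma sum_vwt_filter_card_le_two_mul_card_le [DecidableEq α] {r : ℝ} (h0 : 0 ≤ r)
    (hr : r ≤ 1 - r) (s : Finset α) :
    ∑ g ∈ univ.filter (fun g : α → Bool => #s ≤ 2 * #(s.filter fun a => g a)), vwt r g
      ≤ (2 * √(r * (1 - r))) ^ #s := by
  have hpt : ∀ g : α → Bool, #s ≤ 2 * #(s.filter fun a => g a) →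
      vwt r g ≤ ∏ a, if a ∈ s then √(r * (1 - r)) else if g a then r else 1 - r := by
    intro g hg
    rw [prod_ite, vwt, ← prod_filter_mul_prod_filter_not univ (· ∈ s), filter_univ_mem,
      prod_const]
    gcongr
    · exact prod_nonneg fun _ _ => by split <;> linarith
    rw [prod_ite, prod_const, prod_const]
    have := card_filter_add_card_filter_not (s := s) (fun a => g a = true)
    rw [show #(s.filter fun a => ¬g a = true) = #s - #(s.filter fun a => g a = true) by omega]
    exact pow_mul_one_sub_pow_le_sqrt_pow h0 hr (card_filter_le s _) hg
  calc ∑ g ∈ univ.filter (fun g : α → Bool => #s ≤ 2 * #(s.filter fun a => g a)), vwt r g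
      ≤ ∑ g : α → Bool, ∏ a, if a ∈ s then √(r * (1 - r)) else if g a then r else 1 - r := by
        refine (sum_le_sum fun g hg => hpt g (mem_filter.mp hg).2).trans ?_
        refine sum_le_sum_of_subset_of_nonneg (filter_subset _ _) fun g _ _ => ?_
        exact prod_nonneg fun a _ => by split_ifs <;> first | positivity | linarith
    _ = (2 * √(r * (1 - r))) ^ #s := by
        rw [sum_prod_bool fun a b => if a ∈ s then √(r * (1 - r)) else if b then r else 1 - r,
          ← prod_const, ← univ_inter s, ← prod_ite_mem univ s]
        refine prod_congr rfl fun a _ => ?_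
        by_cases ha : a ∈ s <;> simp [ha]
        ring

lemma sum_vwt_filter_card_le_two_mul_card_le_exp [DecidableEq α] {ε t : ℝ} (hq0 : 0 ≤ 1/2 - ε)
    (hε : 0 ≤ ε) (s : Finset α) (ht : t ≤ #s) :
    ∑ g ∈ univ.filter (fun g : α → Bool => #s ≤ 2 * #(s.filter fun a => g a)), vwt (1/2 - ε) g
      ≤ exp (-(2 * ε ^ 2 * t)) :=
  calc _ ≤ (2 * √((1/2 - ε) * (1 - (1/2 - ε)))) ^ #s :=
        sum_vwt_filter_card_le_two_mul_card_le hq0 (by linarith) s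
    _ ≤ exp (-(2 * ε ^ 2)) ^ #s := by
        gcongr
        exact two_mul_sqrt_mul_one_sub_le_exp ε
    _ ≤ exp (-(2 * ε ^ 2 * t)) := by
        rw [← exp_nat_mul, exp_le_exp]
        nlinarith

end ProductBernoulli

section Labelings

variable {V : Type*}

lemma Int.units_eq_of_ne_iff_ne {a b c : ℤˣ} (h : a ≠ c ↔ b ≠ c) : a = b := by
  rcases Int.units_eq_one_or a with rfl | rfl <;>
  rcases Int.units_eq_one_or b with rfl | rfl <;>
  rcases Int.units_eq_one_or c with rfl | rfl <;> simp_all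

lemma ite_neg_one_mul_ne_self_iff (b : Bool) (u : ℤˣ) :
    (if b then -1 else 1) * u ≠ u ↔ b = true := by
  cases b <;> simp [neg_units_ne_self]

lemma Zof_ne_iff (Y : V → ℤˣ) (g : V → Bool) (v : V) : Zof Y g v ≠ Y v ↔ g v = true :=
  ite_neg_one_mul_ne_self_iff _ _

lemma card_ne_le_two_mul_card_ne_and_ne [Fintype V] {β : Type*} [DecidableEq β]
    {Yh Y Z : V → β}
    (h : #(univ.filter fun v => Yh v ≠ Z v) ≤ #(univ.filter fun v => Y v ≠ Z v)) :
    #(univ.filter fun v => Yh v ≠ Y v) ≤ 2 * #(univ.filter fun v => Yh v ≠ Y v ∧ Z v ≠ Y v) := by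
  have key : ∀ v, ((if Yh v ≠ Y v then 1 else 0 : ℤ) + if Y v ≠ Z v then 1 else 0)
      ≤ (if Yh v ≠ Z v then 1 else 0) + 2 * if Yh v ≠ Y v ∧ Z v ≠ Y v then 1 else 0 := by
    intro v
    by_cases h1 : Yh v = Y v <;> by_cases h2 : Z v = Y v <;> by_cases h3 : Yh v = Z v <;>
      simp_all [eq_comm]
  have := sum_le_sum fun v (_ : v ∈ univ) => key v
  simp only [sum_add_distrib, ← mul_sum, sum_boole] at this
  omega

variable [Fintype V] {G : SimpleGraph V} [DecidableRel G.Adj]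

variable (G) in
def violatedEdges (Yh : V → ℤˣ) (X : Sym2 V → ℤˣ) : Finset (Sym2 V) :=
  G.edgeFinset.filter fun e => edgeLabel Yh e ≠ X e

lemma edgeCost_Xof [DecidableEq V] (Y : V → ℤˣ) (f : Sym2 V → Bool) :
    edgeCost G Y (Xof Y f) = #(G.edgeFinset.filter fun e => f e) := by
  unfold edgeCost
  congr 1
  exact filter_congr fun e _ => ne_comm.trans (ite_neg_one_mul_ne_self_iff _ _)

lemma eq_of_violatedEdges_eq (hc : G.Connected) {X : Sym2 V → ℤˣ} {Y₁ Y₂ : V → ℤˣ} {r : V}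
    (hr : Y₁ r = Y₂ r) (h : violatedEdges G Y₁ X = violatedEdges G Y₂ X) : Y₁ = Y₂ := by
  funext v
  induction (SimpleGraph.reachable_iff_reflTransGen r v).mp (hc r v) with
  | refl => exact hr
  | @tail u w _ hadj ih =>
    have he : s(u, w) ∈ G.edgeFinset := G.mem_edgeFinset.mpr hadj
    have hiff := congrArg (s(u, w) ∈ ·) h
    simp only [violatedEdges, mem_filter, he, true_and, eq_iff_iff] at hiff
    have hlabel : Y₁ u * Y₁ w = Y₂ u * Y₂ w := Int.units_eq_of_ne_iff_ne hiff
    rw [ih] at hlabel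
    exact mul_left_cancel hlabel

lemma sum_pow_edgeCost_le [DecidableEq V] (hc : G.Connected) (X : Sym2 V → ℤˣ) {x : ℝ}
    (hx : 0 ≤ x) :
    ∑ Yh : V → ℤˣ, x ^ edgeCost G Yh X ≤ 2 * (1 + x) ^ #G.edgeFinset := by
  obtain ⟨r⟩ := hc.nonempty
  let ι : (V → ℤˣ) → ℤˣ × Finset (Sym2 V) := fun Yh => (Yh r, violatedEdges G Yh X)
  have hinj : Set.InjOn ι (univ : Finset (V → ℤˣ)) := fun _ _ _ _ h =>
    eq_of_violatedEdges_eq hc (Prod.ext_iff.mp h).1 (Prod.ext_iff.mp h).2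
  calc ∑ Yh : V → ℤˣ, x ^ edgeCost G Yh X = ∑ p ∈ univ.image ι, x ^ #p.2 :=
        (sum_image (f := fun p : ℤˣ × Finset (Sym2 V) => x ^ #p.2) hinj).symm
    _ ≤ ∑ p ∈ univ ×ˢ G.edgeFinset.powerset, x ^ #p.2 := by
        refine sum_le_sum_of_subset_of_nonneg ?_ fun _ _ _ => by positivity
        intro p hp
        obtain ⟨Yh, _, rfl⟩ := mem_image.mp hp
        exact mem_product.mpr ⟨mem_univ _, mem_powerset.mpr (filter_subset _ _)⟩
    _ = 2 * (1 + x) ^ #G.edgeFinset := by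
        simp only [sum_product, sum_const, card_univ, Fintype.card_units_int, nsmul_eq_mul]
        rw [add_comm, ← sum_pow_mul_eq_add_pow x 1]
        simp

lemma card_filter_edgeCost_le_le [DecidableEq V] (hc : G.Connected) (X : Sym2 V → ℤˣ) {x : ℝ}
    (hx0 : 0 < x) (hx1 : x ≤ 1) (B : ℝ) :
    (#(univ.filter fun Yh : V → ℤˣ => (edgeCost G Yh X : ℝ) ≤ B) : ℝ)
      ≤ 2 * (1 + x) ^ #G.edgeFinset * exp (-(B * log x)) := by
  have hlog : log x ≤ 0 := log_nonpos hx0.le hx1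
  calc (#(univ.filter fun Yh : V → ℤˣ => (edgeCost G Yh X : ℝ) ≤ B) : ℝ)
      ≤ ∑ Yh : V → ℤˣ, 1 * (x ^ edgeCost G Yh X * exp (-(B * log x))) := by
        rw [card_eq_sum_ones, Nat.cast_sum, Nat.cast_one]
        refine sum_filter_le_sum_mul (fun _ => zero_le_one) (fun Yh hYh => ?_)
          (fun _ => by positivity) _
        rw [← exp_log (pow_pos hx0 _), ← exp_add, log_pow]
        exact one_le_exp (by nlinarith)
    _ ≤ 2 * (1 + x) ^ #G.edgeFinset * exp (-(B * log x)) := by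
        simp only [one_mul, ← sum_mul]
        gcongr
        exact sum_pow_edgeCost_le hc X hx0.le

end Labelings

lemma sum_vwt_filter_lt_card_sel_ne_le {V : Type*} [Fintype V] [DecidableEq V] {ε T : ℝ}
    (hq0 : 0 ≤ 1/2 - ε) (hε : 0 ≤ ε) (Y : V → ℤˣ) {F : Finset (V → ℤˣ)}
    {sel : (V → ℤˣ) → V → ℤˣ} (hselF : ∀ Z, sel Z ∈ F)
    (hselMin : ∀ Z,
      #(univ.filter fun v => sel Z v ≠ Z v) ≤ #(univ.filter fun v => Y v ≠ Z v)) :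
    ∑ g ∈ univ.filter (fun g => T < #(univ.filter fun v => sel (Zof Y g) v ≠ Y v)),
        vwt (1/2 - ε) g
      ≤ #F * exp (-(2 * ε ^ 2 * T)) := by
  let errors : (V → ℤˣ) → Finset V := fun Yh => univ.filter fun v => Yh v ≠ Y v
  have houtvoted : ∀ g : V → Bool, #(errors (sel (Zof Y g)))
      ≤ 2 * #((errors (sel (Zof Y g))).filter fun v => g v) := by
    intro g
    have h := card_ne_le_two_mul_card_ne_and_ne (hselMin (Zof Y g))
    simp only [Zof_ne_iff] at h
    rwa [filter_filter]
  calc ∑ g ∈ univ.filter (fun g => T < #(univ.filter fun v => sel (Zof Y g) v ≠ Y v)),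
        vwt (1/2 - ε) g
      ≤ ∑ Yh ∈ F.filter (fun Yh => T < #(errors Yh)), ∑ g ∈ univ.filter
          (fun g : V → Bool => #(errors Yh) ≤ 2 * #((errors Yh).filter fun v => g v)),
            vwt (1/2 - ε) g :=
        sum_filter_le_sum_sum_filter (vwt_nonneg hq0 (by linarith)) fun g hg =>
          ⟨sel (Zof Y g), mem_filter.mpr ⟨hselF _, hg⟩, houtvoted g⟩
    _ ≤ ∑ Yh ∈ F.filter (fun Yh => T < #(errors Yh)), exp (-(2 * ε ^ 2 * T)) :=
        sum_le_sum fun Yh hYh => sum_vwt_filter_card_le_two_mul_card_le_exp hq0 hε _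
          (mem_filter.mp hYh).2.le
    _ ≤ #F * exp (-(2 * ε ^ 2 * T)) := by
        rw [sum_const, nsmul_eq_mul]
        gcongr
        exact filter_subset _ _

lemma exp_chernoff_exponent_le {p δ : ℝ} {m n : ℕ} (hp0 : 0 ≤ p) (hδ : 0 < δ) (hδ1 : δ ≤ 1)
    (hmn : m ≤ n) : exp (p * (exp 1 - 1) * m - (2 * p * n + 2 * log (2 / δ))) ≤ δ / 2 := by
  have he : exp 1 - 1 ≤ 2 := by linarith [exp_one_lt_d9]
  have hlog : 0 ≤ log (2 / δ) := log_nonneg (by rw [le_div_iff₀ hδ]; linarith)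
  have hpm : p * (exp 1 - 1) * m ≤ 2 * p * n := by
    have : (m : ℝ) ≤ n := by exact_mod_cast hmn
    have : 0 ≤ exp 1 - 1 := by linarith [add_one_le_exp 1]
    calc p * (exp 1 - 1) * m ≤ p * 2 * n := by gcongr
      _ = 2 * p * n := by ring
  calc exp (p * (exp 1 - 1) * m - (2 * p * n + 2 * log (2 / δ))) ≤ exp (-log (2 / δ)) :=
        exp_le_exp.mpr (by linarith)
    _ = δ / 2 := by rw [exp_neg, exp_log (by positivity), inv_div]

lemma two_mul_one_add_pow_mul_exp_mul_exp_le {p δ B : ℝ} {m : ℕ} (hp0 : 0 < p) (hp : p < 1/2)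
    (hδ : 0 < δ) (hδ1 : δ ≤ 1) (hB : 2 * p * m ≤ B) :
    2 * (1 + 2 * p) ^ m * exp (-(B * log (2 * p)))
        * exp (-(2 * (B + 1) * log (2 * exp 1 / (p * δ)))) ≤ δ / 2 := by
  set M := log (2 * exp 1 / (p * δ))
  have he : 2 ≤ exp 1 := by linarith [add_one_le_exp 1]
  have hB0 : 0 ≤ B := le_trans (by positivity) hB
  have hM1 : 1 - log (2 * p) ≤ M := by
    rw [← log_exp 1, ← log_div (exp_ne_zero 1) (by positivity)]
    refine log_le_log (by positivity) ?_
    rw [div_le_div_iff₀ (by positivity) (by positivity)]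
    nlinarith [exp_pos 1, mul_pos (exp_pos 1) hp0]
  have hM2 : log (4 / δ) ≤ M := by
    refine log_le_log (by positivity) ?_
    rw [div_le_div_iff₀ hδ (by positivity)]
    nlinarith [mul_pos hp0 hδ]
  have hM0 : 0 ≤ M := le_trans (log_nonneg (by rw [le_div_iff₀ hδ]; linarith)) hM2
  have hpow : (1 + 2 * p) ^ m ≤ exp (2 * p * m) := by
    rw [show 2 * p * m = m * (2 * p) by ring, exp_nat_mul]
    gcongr
    linarith [add_one_le_exp (2 * p)]
  calc 2 * (1 + 2 * p) ^ m * exp (-(B * log (2 * p))) * exp (-(2 * (B + 1) * M))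
      ≤ 2 * exp (2 * p * m) * exp (-(B * log (2 * p))) * exp (-(2 * (B + 1) * M)) := by
        gcongr
    _ = 2 * exp (2 * p * m - B * log (2 * p) - 2 * (B + 1) * M) := by
        rw [sub_eq_add_neg, sub_eq_add_neg, exp_add, exp_add]; ring
    _ ≤ 2 * exp (-log (4 / δ)) := by
        gcongr
        nlinarith
    _ = δ / 2 := by
        rw [exp_neg, exp_log (by positivity), inv_div]; ring

lemma sum_vwt_filter_lt_card_sel_ne_le_half {V : Type*} [Fintype V] [DecidableEq V]
    {G : SimpleGraph V} [DecidableRel G.Adj] (hT : G.IsTree) {p ε δ : ℝ} (hp0 : 0 < p)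
    (hp : p < 1/2) (hq0 : 0 ≤ 1/2 - ε) (hε : 0 < ε) (hδ : 0 < δ) (hδ1 : δ ≤ 1) (Y : V → ℤˣ)
    (X : Sym2 V → ℤˣ) (sel : (V → ℤˣ) → V → ℤˣ)
    (hselCon : ∀ Z, (edgeCost G (sel Z) X : ℝ) ≤ 2 * p * Fintype.card V + 2 * log (2 / δ))
    (hselMin : ∀ Z,
      #(univ.filter fun v => sel Z v ≠ Z v) ≤ #(univ.filter fun v => Y v ≠ Z v)) :
    ∑ g ∈ univ.filter (fun g => (1 / ε ^ 2) * (2 * p * Fintype.card V + 2 * log (2 / δ) + 1)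
        * log (2 * exp 1 / (p * δ)) < #(univ.filter fun v => sel (Zof Y g) v ≠ Y v)),
      vwt (1/2 - ε) g ≤ δ / 2 := by
  set B := 2 * p * Fintype.card V + 2 * log (2 / δ)
  set T := (1 / ε ^ 2) * (B + 1) * log (2 * exp 1 / (p * δ)) with hTdef
  have hB : 2 * p * #G.edgeFinset ≤ B := by
    have : (#G.edgeFinset : ℝ) ≤ Fintype.card V := by
      have := hT.card_edgeFinset
      exact_mod_cast (by omega : #G.edgeFinset ≤ Fintype.card V)
    have : 0 ≤ log (2 / δ) := log_nonneg (by rw [le_div_iff₀ hδ]; linarith)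
    nlinarith
  calc _ ≤ #(univ.filter fun Yh : V → ℤˣ => (edgeCost G Yh X : ℝ) ≤ B)
        * exp (-(2 * ε ^ 2 * T)) :=
        sum_vwt_filter_lt_card_sel_ne_le hq0 hε.le Y
          (fun Z => mem_filter.mpr ⟨mem_univ _, hselCon Z⟩) hselMin
    _ ≤ 2 * (1 + 2 * p) ^ #G.edgeFinset * exp (-(B * log (2 * p)))
        * exp (-(2 * (B + 1) * log (2 * exp 1 / (p * δ)))) := by
        rw [show 2 * ε ^ 2 * T = 2 * (B + 1) * log (2 * exp 1 / (p * δ)) by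
          rw [hTdef]; field_simp]
        gcongr
        exact card_filter_edgeCost_le_le hT.connected _ (by positivity) (by linarith) B
    _ ≤ δ / 2 := two_mul_one_add_pow_mul_exp_mul_exp_le hp0 hp hδ hδ1 hB

/-- Tree inference guarantee: if `G` is a tree on `n` vertices and `Ŷ` minimizes the
disagreement with the vertex observations `Z` subject to having at most `2pn + 2 log(2/δ)`
violated edge observations, then with probability at least `1 − δ` its Hamming error is at
most `(1/ε²)(2pn + 2 log(2/δ) + 1) log(2e/(pδ))`. -/
theorem stmt11 {V : Type*} [Fintype V] [DecidableEq V] (G : SimpleGraph V)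
    [DecidableRel G.Adj] (hT : G.IsTree)
    (p q ε δ : ℝ) (hp0 : 0 < p) (hp : p < 1/2) (hq0 : 0 ≤ q) (hq : q = 1/2 - ε)
    (hε : 0 < ε) (hδ : 0 < δ) (hδ1 : δ ≤ 1)
    (Y : V → ℤˣ)
    (sel : (Sym2 V → ℤˣ) → (V → ℤˣ) → (V → ℤˣ))
    (hselCon : ∀ X Z, (edgeCost G (sel X Z) X : ℝ)
        ≤ 2 * p * (Fintype.card V) + 2 * Real.log (2/δ))
    (hselMin : ∀ X Z, ∀ Y' : V → ℤˣ,
        ((edgeCost G Y' X : ℝ) ≤ 2 * p * (Fintype.card V) + 2 * Real.log (2/δ)) →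
          (Finset.univ.filter (fun v => sel X Z v ≠ Z v)).card
            ≤ (Finset.univ.filter (fun v => Y' v ≠ Z v)).card) :
    1 - δ ≤ ∑ f : Sym2 V → Bool, ∑ g : V → Bool,
        ewt p f * vwt q g *
          (if ((Finset.univ.filter
                (fun v => sel (Xof Y f) (Zof Y g) v ≠ Y v)).card : ℝ)
              ≤ (1/ε^2) * (2 * p * (Fintype.card V) + 2 * Real.log (2/δ) + 1)
                  * Real.log (2 * Real.exp 1 / (p * δ))
            then 1 else 0) := by
  subst hq
  -- `ewt p` is definitionally `vwt p` on `Sym2 V`, so the lemmas on `vwt` apply to it.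
  have hedges : ∑ f ∈ univ.filter (fun f : Sym2 V → Bool =>
      2 * p * Fintype.card V + 2 * log (2 / δ) < #(G.edgeFinset.filter fun e => f e)), ewt p f
        ≤ δ / 2 :=
    (sum_vwt_filter_lt_card_le hp0.le (by linarith) _ _).trans
      (exp_chernoff_exponent_le hp0.le hδ hδ1 (by have := hT.card_edgeFinset; omega))
  calc 1 - δ = 1 - (δ / 2 + δ / 2) := by ring
    _ ≤ _ := one_sub_add_le_sum_sum_mul_ite (w₁ := ewt p)
      (fun _ => vwt_nonneg hp0.le (by linarith) _) (fun _ => vwt_nonneg hq0 (by linarith) _)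
      (sum_vwt p) (sum_vwt _) (by positivity) hedges fun f hf => by
        simpa only [not_le] using sum_vwt_filter_lt_card_sel_ne_le_half hT hp0 hp hq0 hε hδ hδ1
          Y _ _ (hselCon _) fun Z => hselMin _ Z Y (by rw [edgeCost_Xof]; exact not_lt.mp hf)
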